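/- arXiv:0901.0696 — 2 statements merged into one kernel-verified Lean document; each statement's English description precedes it below -/
import Mathlib

section
/- For every n ≥ 1, the identity Σ_{t ∈ U_n} n!/2^{sym(t)} = (2n-3)!! holds, where the sum is over all isomorphism classes of Otter trees with n leaves. -/
open scoped Classical

/-- Plane binary trees: every node has outdegree 0 or 2. -/
inductive BT where
  | leaf : BT
  | node : BT → BT → BT

/-- Isomorphism of rooted binary trees with *unordered* children. -/
inductive Iso : BT → BT → Prop
  | leaf : Iso .leaf .leaf
  | node {a b c d} : Iso a c → Iso b d → Iso (.node a b) (.node c d)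
  | swap {a b c d} : Iso a d → Iso b c → Iso (.node a b) (.node c d)

theorem Iso.rfl : ∀ t, Iso t t
  | .leaf => .leaf
  | .node l r => .node (Iso.rfl l) (Iso.rfl r)

theorem Iso.symm' {a b : BT} (h : Iso a b) : Iso b a := by
  induction h with
  | leaf => exact .leaf
  | node h1 h2 ih1 ih2 => exact .node ih1 ih2
  | swap h1 h2 ih1 ih2 => exact .swap ih2 ih1

theorem Iso.trans' : ∀ {a b c : BT}, Iso a b → Iso b c → Iso a c := by
  intro a b c h1
  induction h1 generalizing c with
  | leaf => exact fun h2 => h2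
  | node g1 g2 ih1 ih2 =>
      intro h2
      cases h2 with
      | node k1 k2 => exact .node (ih1 k1) (ih2 k2)
      | swap k1 k2 => exact .swap (ih1 k1) (ih2 k2)
  | swap g1 g2 ih1 ih2 =>
      intro h2
      cases h2 with
      | node k1 k2 => exact .swap (ih1 k2) (ih2 k1)
      | swap k1 k2 => exact .node (ih1 k2) (ih2 k1)

instance btSetoid : Setoid BT :=
  ⟨Iso, ⟨Iso.rfl, Iso.symm', Iso.trans'⟩⟩

/-- Otter trees: isomorphism classes of unordered rooted binary trees. -/
def Otter : Type := Quotient btSetoid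

/-- Number of leaves. -/
def leavesBT : BT → ℕ
  | .leaf => 1
  | .node l r => leavesBT l + leavesBT r

/-- Number of internal (binary) nodes. -/
def internalsBT : BT → ℕ
  | .leaf => 0
  | .node l r => internalsBT l + internalsBT r + 1

/-- Number of symmetrical nodes: internal nodes whose two subtrees are isomorphic. -/
noncomputable def symBT : BT → ℕ
  | .leaf => 0
  | .node l r => symBT l + symBT r + (if Iso l r then 1 else 0)

theorem leaves_iso {a b : BT} (h : Iso a b) : leavesBT a = leavesBT b := by
  induction h with
  | leaf => rfl
  | node h1 h2 ih1 ih2 => simp [leavesBT, ih1, ih2]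
  | swap h1 h2 ih1 ih2 => simp [leavesBT, ih1, ih2]; omega

theorem internals_iso {a b : BT} (h : Iso a b) : internalsBT a = internalsBT b := by
  induction h with
  | leaf => rfl
  | node h1 h2 ih1 ih2 => simp [internalsBT, ih1, ih2]
  | swap h1 h2 ih1 ih2 => simp [internalsBT, ih1, ih2]; omega

theorem sym_iso {a b : BT} (h : Iso a b) : symBT a = symBT b := by
  induction h with
  | leaf => rfl
  | @node a b c d h1 h2 ih1 ih2 =>
      have hiff : Iso a b ↔ Iso c d :=
        ⟨fun hab => (h1.symm'.trans' hab).trans' h2,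
         fun hcd => (h1.trans' hcd).trans' h2.symm'⟩
      simp only [symBT, ih1, ih2, if_congr hiff rfl rfl]
  | @swap a b c d h1 h2 ih1 ih2 =>
      have hiff : Iso a b ↔ Iso c d :=
        ⟨fun hab => (h2.symm'.trans' hab.symm').trans' h1,
         fun hcd => (h1.trans' hcd.symm').trans' h2.symm'⟩
      simp only [symBT, ih1, ih2, if_congr hiff rfl rfl]
      omega

def Otter.leaves : Otter → ℕ := Quotient.lift leavesBT fun _ _ h => leaves_iso h
def Otter.internals : Otter → ℕ := Quotient.lift internalsBT fun _ _ h => internals_iso h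
noncomputable def Otter.sym : Otter → ℕ := Quotient.lift symBT fun _ _ h => sym_iso h

/-- The set (as a type) of Otter trees with `n` leaves. -/
def OtterN (n : ℕ) : Type := {q : Otter // q.leaves = n}

/-- Wedderburn–Etherington numbers: number of Otter trees with `n` leaves. -/
noncomputable def WE (n : ℕ) : ℕ := Nat.card (OtterN n)

/-- Binary trees with labeled leaves. -/
inductive LBT where
  | leaf : ℕ → LBT
  | node : LBT → LBT → LBT

/-- Label-preserving isomorphism with unordered children. -/
inductive LIso : LBT → LBT → Prop
  | leaf (k : ℕ) : LIso (.leaf k) (.leaf k)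
  | node {a b c d} : LIso a c → LIso b d → LIso (.node a b) (.node c d)
  | swap {a b c d} : LIso a d → LIso b c → LIso (.node a b) (.node c d)

theorem LIso.rfl : ∀ t, LIso t t
  | .leaf k => .leaf k
  | .node l r => .node (LIso.rfl l) (LIso.rfl r)

theorem LIso.symm' {a b : LBT} (h : LIso a b) : LIso b a := by
  induction h with
  | leaf k => exact .leaf k
  | node h1 h2 ih1 ih2 => exact .node ih1 ih2
  | swap h1 h2 ih1 ih2 => exact .swap ih2 ih1

theorem LIso.trans' : ∀ {a b c : LBT}, LIso a b → LIso b c → LIso a c := by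
  intro a b c h1
  induction h1 generalizing c with
  | leaf k => exact fun h2 => h2
  | node g1 g2 ih1 ih2 =>
      intro h2
      cases h2 with
      | node k1 k2 => exact .node (ih1 k1) (ih2 k2)
      | swap k1 k2 => exact .swap (ih1 k1) (ih2 k2)
  | swap g1 g2 ih1 ih2 =>
      intro h2
      cases h2 with
      | node k1 k2 => exact .swap (ih1 k2) (ih2 k1)
      | swap k1 k2 => exact .node (ih1 k2) (ih2 k1)

instance ltSetoid : Setoid LBT :=
  ⟨LIso, ⟨LIso.rfl, LIso.symm', LIso.trans'⟩⟩

/-- Labeled (phylogenetic-type) trees up to label-preserving isomorphism. -/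
def LTree : Type := Quotient ltSetoid

/-- The multiset of leaf labels. -/
def labelsLT : LBT → Multiset ℕ
  | .leaf k => {k}
  | .node l r => labelsLT l + labelsLT r

/-- The underlying unlabeled shape of a labeled tree. -/
def shapeLT : LBT → BT
  | .leaf _ => .leaf
  | .node l r => .node (shapeLT l) (shapeLT r)

theorem labels_iso {a b : LBT} (h : LIso a b) : labelsLT a = labelsLT b := by
  induction h with
  | leaf k => rfl
  | node h1 h2 ih1 ih2 => simp [labelsLT, ih1, ih2]
  | swap h1 h2 ih1 ih2 => simp [labelsLT, ih1, ih2]; exact add_comm _ _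

theorem shape_iso {a b : LBT} (h : LIso a b) : Iso (shapeLT a) (shapeLT b) := by
  induction h with
  | leaf k => exact .leaf
  | node h1 h2 ih1 ih2 => exact .node ih1 ih2
  | swap h1 h2 ih1 ih2 => exact .swap ih1 ih2

def LTree.labels : LTree → Multiset ℕ := Quotient.lift labelsLT fun _ _ h => labels_iso h

def LTree.shape : LTree → Otter :=
  Quotient.lift (fun t => (⟦shapeLT t⟧ : Otter)) fun _ _ h => Quotient.sound (shape_iso h)

/-- Phylogenetic trees of size `n`: labeled trees whose leaf labels are exactly `1, …, n`. -/
def Phylo (n : ℕ) : Type := {q : LTree // q.labels = (Finset.Icc 1 n).val}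

/-- The number of phylogenetic trees of size `n`. -/
noncomputable def phyloCount (n : ℕ) : ℕ := Nat.card (Phylo n)

/-- The double factorial `n!! = n·(n-2)·(n-4)···`. -/
def doubleFac : ℕ → ℕ
  | 0 => 1
  | 1 => 1
  | (n+2) => (n+2) * doubleFac n

/-- The probability that two independent uniformly random phylogenetic trees of
size `n` are isomorphic (have the same shape). -/
noncomputable def pIso (n : ℕ) : ℚ :=
  (Nat.card {pp : Phylo n × Phylo n // pp.1.1.shape = pp.2.1.shape} : ℚ)
    / (Nat.card (Phylo n) : ℚ) ^ 2

/-!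
The plane representatives of an Otter tree `node l r` are the trees `node a b` with `(a, b)` in
`C l × C r ∪ C r × C l`, where `C` denotes the set of representatives; the two products coincide
if `l ≅ r` and are disjoint otherwise. Hence an Otter tree `t` with `n` leaves has exactly
`2 ^ (n - 1 - sym t)` plane representatives, and summing over `t`,
`∑ₜ n! / 2 ^ sym t = n! · catalan (n - 1) / 2 ^ (n - 1)`, the number of plane trees with `n`
leaves being `catalan (n - 1)`. This equals `(2n - 3)!!` since `(2m)! = 2 ^ m · m! · (2m - 1)!!`.
-/

open Finset
open scoped Nat

namespace BT

def toBinaryTree : BT → BinaryTree Unit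
  | .leaf => .nil
  | .node l r => .node () l.toBinaryTree r.toBinaryTree

def ofBinaryTree : BinaryTree Unit → BT
  | .nil => .leaf
  | .node () l r => .node (ofBinaryTree l) (ofBinaryTree r)

def equivBinaryTree : BT ≃ BinaryTree Unit where
  toFun := toBinaryTree
  invFun := ofBinaryTree
  left_inv t := by induction t <;> simp_all [toBinaryTree, ofBinaryTree]
  right_inv t := by induction t <;> simp_all [toBinaryTree, ofBinaryTree]

theorem numNodes_toBinaryTree (t : BT) : t.toBinaryTree.numNodes = internalsBT t := by
  induction t <;> simp_all [toBinaryTree, BinaryTree.numNodes, internalsBT]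

def withInternals (m : ℕ) : Finset BT :=
  (BinaryTree.treesOfNumNodesEq m).map equivBinaryTree.symm.toEmbedding

theorem mem_withInternals {m : ℕ} {t : BT} : t ∈ withInternals m ↔ internalsBT t = m := by
  simp [withInternals, equivBinaryTree, numNodes_toBinaryTree]

theorem card_withInternals (m : ℕ) : #(withInternals m) = catalan m := by
  rw [withInternals, card_map, BinaryTree.treesOfNumNodesEq_card_eq_catalan]

theorem internalsBT_add_one (t : BT) : internalsBT t + 1 = leavesBT t := by
  induction t with
  | leaf => rfl
  | node l r ihl ihr => simp only [internalsBT, leavesBT]; omega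

theorem iso_node_node_iff {a b c d : BT} :
    Iso (.node a b) (.node c d) ↔ Iso a c ∧ Iso b d ∨ Iso a d ∧ Iso b c := by
  constructor
  · rintro (_ | ⟨hac, hbd⟩ | ⟨had, hbc⟩)
    exacts [.inl ⟨hac, hbd⟩, .inr ⟨had, hbc⟩]
  · rintro (⟨hac, hbd⟩ | ⟨had, hbc⟩)
    exacts [.node hac hbd, .swap had hbc]

noncomputable def representatives : BT → Finset BT
  | .leaf => {.leaf}
  | .node l r =>
      (l.representatives ×ˢ r.representatives ∪ r.representatives ×ˢ l.representatives).image
        fun p => .node p.1 p.2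

theorem mem_representatives : ∀ {t s : BT}, s ∈ t.representatives ↔ Iso s t
  | .leaf, .leaf => by simp [representatives, Iso.leaf]
  | .leaf, .node _ _ => by simp [representatives]; nofun
  | .node _ _, .leaf => by simp [representatives]; nofun
  | .node l r, .node a b => by
      simp [representatives, mem_representatives, iso_node_node_iff]

theorem representatives_eq_of_iso {s t : BT} (h : Iso s t) :
    s.representatives = t.representatives := by
  ext u
  simp only [mem_representatives]
  exact ⟨(·.trans' h), (·.trans' h.symm')⟩

theorem node_uncurry_injective : Function.Injective fun p : BT × BT => BT.node p.1 p.2 := by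
  rintro ⟨a, b⟩ ⟨c, d⟩ h
  cases h
  rfl

theorem two_pow_symBT_mul_card_representatives (t : BT) :
    2 ^ symBT t * #t.representatives = 2 ^ internalsBT t := by
  induction t with
  | leaf => rfl
  | node l r ihl ihr =>
    set A := l.representatives
    set B := r.representatives
    have hcard : 2 ^ (if Iso l r then 1 else 0) * #(A ×ˢ B ∪ B ×ˢ A) = 2 * (#A * #B) := by
      by_cases hlr : Iso l r
      · have hAB : A = B := representatives_eq_of_iso hlr
        rw [if_pos hlr, hAB, union_self, card_product, pow_one]
      · have hdisj : Disjoint A B := disjoint_left.2 fun s hl hr =>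
          hlr ((mem_representatives.1 hl).symm'.trans' (mem_representatives.1 hr))
        rw [if_neg hlr, card_union_of_disjoint (disjoint_product.2 (.inl hdisj)), card_product,
          card_product]
        ring
    rw [representatives, card_image_of_injective _ node_uncurry_injective, symBT, internalsBT,
      pow_succ, pow_add, pow_add, pow_add, ← ihl, ← ihr, mul_assoc _ (2 ^ _), hcard]
    ring

end BT

namespace Otter

noncomputable def representatives (q : Otter) : Finset BT := q.out.representatives

theorem representatives_mk (t : BT) : representatives ⟦t⟧ = t.representatives :=
  BT.representatives_eq_of_iso (Quotient.mk_out t)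

theorem mem_representatives {q : Otter} {s : BT} : s ∈ q.representatives ↔ ⟦s⟧ = q :=
  BT.mem_representatives.trans (Quotient.mk_eq_iff_out (s := btSetoid)).symm

theorem internals_add_one (q : Otter) : q.internals + 1 = q.leaves :=
  q.inductionOn BT.internalsBT_add_one

theorem two_pow_sym_mul_card_representatives (q : Otter) :
    2 ^ q.sym * #q.representatives = 2 ^ q.internals :=
  q.inductionOn fun t => by
    rw [representatives_mk]
    exact BT.two_pow_symBT_mul_card_representatives t

theorem leaves_eq_leavesBT_out (q : Otter) : q.leaves = leavesBT q.out :=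
  q.inductionOn fun t => (leaves_iso (Quotient.mk_out t)).symm

end Otter

namespace OtterN

instance finite (n : ℕ) : Finite (OtterN n) :=
  Finite.of_injective
    (fun q : OtterN n => (⟨q.1.out, BT.mem_withInternals.2 <| by
      have h := BT.internalsBT_add_one q.1.out
      rw [← Otter.leaves_eq_leavesBT_out, q.2] at h
      omega⟩ : BT.withInternals (n - 1)))
    fun _ _ h => Subtype.ext (Quotient.out_injective (congrArg Subtype.val h))

noncomputable instance (n : ℕ) : Fintype (OtterN n) := Fintype.ofFinite _

theorem two_pow_sym_mul_card_representatives {m : ℕ} (q : OtterN (m + 1)) :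
    2 ^ q.1.sym * #q.1.representatives = 2 ^ m := by
  have hq := q.1.internals_add_one
  rw [q.2, add_left_inj] at hq
  rw [q.1.two_pow_sym_mul_card_representatives, hq]

theorem sum_card_representatives (m : ℕ) :
    ∑ q : OtterN (m + 1), #q.1.representatives = catalan m := by
  rw [← BT.card_withInternals, ← card_biUnion]
  · congr
    ext s
    rw [BT.mem_withInternals, ← add_left_inj 1, BT.internalsBT_add_one]
    simp only [mem_biUnion, mem_univ, true_and, Otter.mem_representatives]
    exact ⟨fun ⟨q, hq⟩ => (congrArg Otter.leaves hq).trans q.2,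
      fun hs => ⟨⟨⟦s⟧, hs⟩, rfl⟩⟩
  · intro q _ q' _ hne
    refine disjoint_left.2 fun s hq hq' => hne (Subtype.ext ?_)
    rw [← Otter.mem_representatives.1 hq, ← Otter.mem_representatives.1 hq']

end OtterN

theorem doubleFac_eq_doubleFactorial : ∀ n, doubleFac n = n‼
  | 0 | 1 => rfl
  | n + 2 => by rw [doubleFac, Nat.doubleFactorial_add_two, doubleFac_eq_doubleFactorial n]

theorem Nat.factorial_succ_mul_catalan (m : ℕ) :
    (m + 1)! * catalan m = 2 ^ m * (2 * m - 1)‼ := by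
  have hcentral : m ! * m ! * m.centralBinom = (2 * m)! := by
    rw [Nat.centralBinom_eq_two_mul_choose, mul_comm, ← mul_assoc]
    convert Nat.choose_mul_factorial_mul_factorial (n := 2 * m) (k := m) (by omega) using 3
    omega
  have hfactorial : (2 * m)! = 2 ^ m * m ! * (2 * m - 1)‼ := by
    cases m with
    | zero => rfl
    | succ k =>
      rw [show 2 * (k + 1) = 2 * k + 1 + 1 by ring, Nat.factorial_eq_mul_doubleFactorial,
        show 2 * k + 1 + 1 = 2 * (k + 1) by ring, Nat.doubleFactorial_two_mul]
      rfl
  refine Nat.eq_of_mul_eq_mul_left m.factorial_pos ?_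
  calc m ! * ((m + 1)! * catalan m) = m ! * m ! * ((m + 1) * catalan m) := by
        rw [Nat.factorial_succ]; ring
    _ = m ! * (2 ^ m * (2 * m - 1)‼) := by
        rw [succ_mul_catalan_eq_centralBinom, hcentral, hfactorial]; ring

/-- `Σ_{t ∈ U_n} n!/2^{sym(t)} = (2n-3)!!` for every `n ≥ 1`. -/
theorem sum_labelings_eq_doubleFac (n : ℕ) (hn : 1 ≤ n) :
    ∑ᶠ t : OtterN n, ((n.factorial : ℚ) / 2 ^ t.1.sym) =
      (doubleFac (2 * n - 3) : ℚ) := by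
  obtain ⟨m, rfl⟩ : ∃ m, n = m + 1 := ⟨n - 1, by omega⟩
  have hterm (q : OtterN (m + 1)) :
      ((m + 1)! : ℚ) / 2 ^ q.1.sym = (m + 1)! * #q.1.representatives / 2 ^ m := by
    have hq : (2 : ℚ) ^ q.1.sym * #q.1.representatives = 2 ^ m := by
      exact_mod_cast q.two_pow_sym_mul_card_representatives
    rw [div_eq_div_iff (by positivity) (by positivity), ← hq]
    ring
  calc ∑ᶠ q : OtterN (m + 1), ((m + 1)! : ℚ) / 2 ^ q.1.sym
      = ∑ q : OtterN (m + 1), ((m + 1)! : ℚ) * #q.1.representatives / 2 ^ m := by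
        rw [finsum_eq_sum_of_fintype]
        exact sum_congr rfl fun q _ => hterm q
    _ = ((m + 1)! * catalan m : ℕ) / 2 ^ m := by
        rw [← sum_div, ← mul_sum, ← OtterN.sum_card_representatives]
        push_cast
        rfl
    _ = doubleFac (2 * (m + 1) - 3) := by
        rw [Nat.factorial_succ_mul_catalan, doubleFac_eq_doubleFactorial,
          show 2 * (m + 1) - 3 = 2 * m - 1 by omega]
        push_cast
        field_simp
end

section
/- For each n ≥ 1, the polynomial φ_n(u) = Σ_{t ∈ U_n} u^{sym(t)} satisfies the recurrence: φ_1(u) = 1 and, for n ≥ 2, φ_n(u) = (1/2) Σ_{k=1}^{n-1} φ_k(u) φ_{n−k}(u) + (u − 1/2)·[n even]·φ_{n/2}(u²). -/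
open scoped Classical

/-- The generating polynomial `φ_n(u) = Σ_{t ∈ U_n} u^{sym t}`. -/
noncomputable def phi (n : ℕ) : Polynomial ℚ :=
  ∑ᶠ t : OtterN n, (Polynomial.X : Polynomial ℚ) ^ t.1.sym

/-! A tree with at least two leaves is `node a b` for an unordered pair `{a, b}`, and
`sym (node a b) = sym a + sym b + [a = b]`. The sum of `u ^ (sym a + sym b)` over ordered pairs
with `|a| + |b| = n`, which is `Σ φ_k φ_{n-k}`, counts a tree `node a b` with `a ≠ b` twice with
weight `u ^ sym t`, but `node a a` only once with weight `u ^ (2 sym a) = u ^ (sym t - 1)`.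
Adding `(2u - 1) u ^ (2 sym a)` on the diagonal makes every fibre contribute exactly
`2 u ^ sym t`, and the diagonal sum is `φ_{n/2}(u²)`. -/

open Polynomial Finset

theorem one_le_leavesBT : ∀ t : BT, 1 ≤ leavesBT t
  | .leaf => le_rfl
  | .node l _ => (one_le_leavesBT l).trans (Nat.le_add_right _ _)

namespace Otter

def leaf : Otter := ⟦BT.leaf⟧

def node (a b : Otter) : Otter :=
  Quotient.map₂ BT.node (fun _ _ h _ _ h' => Iso.node h h') a b

theorem one_le_leaves (q : Otter) : 1 ≤ q.leaves :=
  Quotient.inductionOn q one_le_leavesBT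

theorem leaves_node (a b : Otter) : (node a b).leaves = a.leaves + b.leaves := by
  induction a using Quotient.ind
  induction b using Quotient.ind
  rfl

theorem node_comm (a b : Otter) : node a b = node b a := by
  induction a using Quotient.ind
  induction b using Quotient.ind
  exact Quotient.sound (.swap (Iso.rfl _) (Iso.rfl _))

theorem sym_node (a b : Otter) : (node a b).sym = a.sym + b.sym + if a = b then 1 else 0 := by
  induction a using Quotient.ind with | _ a =>
  induction b using Quotient.ind with | _ b =>
  exact congrArg (symBT a + symBT b + ·)
    (if_congr ⟨fun h => Quotient.sound h, fun h => Quotient.exact h⟩ rfl rfl)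

theorem node_eq_node_iff {a b c d : Otter} :
    node a b = node c d ↔ (a = c ∧ b = d) ∨ (a = d ∧ b = c) := by
  refine ⟨fun h => ?_, ?_⟩
  · induction a using Quotient.ind
    induction b using Quotient.ind
    induction c using Quotient.ind
    induction d using Quotient.ind
    cases Quotient.exact h with
    | node h₁ h₂ => exact .inl ⟨Quotient.sound h₁, Quotient.sound h₂⟩
    | swap h₁ h₂ => exact .inr ⟨Quotient.sound h₁, Quotient.sound h₂⟩
  · rintro (⟨rfl, rfl⟩ | ⟨rfl, rfl⟩)
    · rfl
    · exact node_comm _ _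

theorem exists_node_eq {q : Otter} (hq : 2 ≤ q.leaves) : ∃ a b, node a b = q := by
  induction q using Quotient.ind with | _ t =>
  cases t with
  | leaf => exact absurd hq (by decide)
  | node l r => exact ⟨⟦l⟧, ⟦r⟧, rfl⟩

theorem eq_leaf_of_leaves_eq_one {q : Otter} (hq : q.leaves = 1) : q = leaf := by
  induction q using Quotient.ind with | _ t =>
  cases t with
  | leaf => rfl
  | node l r =>
    have := one_le_leavesBT l
    have := one_le_leavesBT r
    change leavesBT l + leavesBT r = 1 at hq
    omega

theorem finite_setOf_leaves_eq (n : ℕ) : {q : Otter | q.leaves = n}.Finite := by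
  induction n using Nat.strong_induction_on with | _ n ih =>
  have hsub : {q : Otter | q.leaves = n} ⊆ insert leaf ((fun p => node p.1 p.2) ''
      ⋃ k ∈ Finset.Ico 1 n, {q | q.leaves = k} ×ˢ {q | q.leaves = n - k}) := by
    intro q hq
    rcases Nat.lt_or_ge q.leaves 2 with h | h
    · exact .inl (eq_leaf_of_leaves_eq_one (by have := one_le_leaves q; omega))
    obtain ⟨a, b, rfl⟩ := exists_node_eq h
    have hab : a.leaves + b.leaves = n := (leaves_node a b).symm.trans hq
    have := one_le_leaves a
    have := one_le_leaves b
    refine .inr ⟨(a, b), Set.mem_biUnion (x := a.leaves) ?_ ⟨rfl, ?_⟩, rfl⟩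
    · simp only [coe_Ico, Set.mem_Ico]; omega
    · change b.leaves = n - a.leaves; omega
  refine (Set.Finite.insert _ (Set.Finite.image _ ?_)).subset hsub
  refine (Finset.Ico 1 n).finite_toSet.biUnion fun k hk => ?_
  simp only [coe_Ico, Set.mem_Ico] at hk
  exact (ih k (by omega)).prod (ih (n - k) (by omega))

noncomputable def withLeaves (n : ℕ) : Finset Otter := (finite_setOf_leaves_eq n).toFinset

@[simp] theorem mem_withLeaves {q : Otter} {n : ℕ} : q ∈ withLeaves n ↔ q.leaves = n :=
  Set.Finite.mem_toFinset _

theorem withLeaves_one : withLeaves 1 = {leaf} := by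
  ext q
  simp only [mem_withLeaves, mem_singleton]
  exact ⟨eq_leaf_of_leaves_eq_one, fun h => h ▸ rfl⟩

noncomputable def pairsWithLeaves (n : ℕ) : Finset (Otter × Otter) :=
  (Finset.Ico 1 n).biUnion fun k => withLeaves k ×ˢ withLeaves (n - k)

@[simp] theorem mem_pairsWithLeaves {n : ℕ} {p : Otter × Otter} :
    p ∈ pairsWithLeaves n ↔ p.1.leaves + p.2.leaves = n := by
  have := one_le_leaves p.1
  have := one_le_leaves p.2
  simp only [pairsWithLeaves, mem_biUnion, mem_Ico, mem_product, mem_withLeaves]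
  constructor
  · rintro ⟨k, -, rfl, h⟩; omega
  · intro h; exact ⟨p.1.leaves, by omega, rfl, by omega⟩

theorem filter_node_eq_node {n : ℕ} {a b : Otter} (hab : a.leaves + b.leaves = n) :
    {p ∈ pairsWithLeaves n | node p.1 p.2 = node a b} = {(a, b), (b, a)} := by
  ext ⟨c, d⟩
  simp only [mem_filter, mem_pairsWithLeaves, node_eq_node_iff, mem_insert, mem_singleton,
    Prod.mk.injEq]
  constructor
  · exact fun h => h.2
  · rintro (⟨rfl, rfl⟩ | ⟨rfl, rfl⟩) <;> simp only [and_true, true_or, or_true] <;>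
      omega

end Otter

open Otter

theorem phi_eq_sum (n : ℕ) : phi n = ∑ t ∈ withLeaves n, (X : ℚ[X]) ^ t.sym :=
  (finsum_set_coe_eq_finsum_mem (f := fun t : Otter => (X : ℚ[X]) ^ t.sym)
    {q : Otter | q.leaves = n}).trans
    (finsum_mem_eq_finite_toFinset_sum _ (finite_setOf_leaves_eq n))

theorem phi_one : phi 1 = 1 := by
  rw [phi_eq_sum, withLeaves_one, sum_singleton]
  rfl

theorem sum_phi_mul_phi (n : ℕ) :
    ∑ k ∈ Finset.Ico 1 n, phi k * phi (n - k)
      = ∑ p ∈ pairsWithLeaves n, (X : ℚ[X]) ^ (p.1.sym + p.2.sym) := by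
  rw [pairsWithLeaves, sum_biUnion]
  · refine sum_congr rfl fun k _ => ?_
    simp only [phi_eq_sum, sum_mul_sum, sum_product, pow_add]
  · intro k _ k' _ hne
    simp only [Function.onFun, disjoint_left, mem_product, mem_withLeaves]
    rintro p ⟨rfl, -⟩ ⟨h, -⟩
    exact hne h

theorem sum_diagonal_pairsWithLeaves (n : ℕ) :
    ∑ p ∈ pairsWithLeaves n with p.1 = p.2, (X : ℚ[X]) ^ (p.1.sym + p.2.sym)
      = if Even n then (phi (n / 2)).comp (X ^ 2) else 0 := by
  split_ifs with hn
  · obtain ⟨m, rfl⟩ := hn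
    rw [← two_mul, Nat.mul_div_cancel_left m two_pos, phi_eq_sum, Polynomial.sum_comp]
    refine sum_nbij' Prod.fst (fun a => (a, a)) ?_ ?_ ?_ ?_ ?_
    · rintro ⟨a, b⟩ h
      obtain ⟨hab, rfl : a = b⟩ := mem_filter.1 h
      exact mem_withLeaves.2 (by rw [mem_pairsWithLeaves] at hab; dsimp only at hab ⊢; omega)
    · intro a ha
      rw [mem_withLeaves] at ha
      exact mem_filter.2 ⟨mem_pairsWithLeaves.2 (by dsimp only; omega), rfl⟩
    · exact fun p hp => Prod.ext rfl (mem_filter.1 hp).2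
    · exact fun _ _ => rfl
    · rintro ⟨a, b⟩ h
      obtain rfl : a = b := (mem_filter.1 h).2
      simp only [pow_comp, X_comp, ← pow_mul]
      ring
  · refine sum_eq_zero fun p hp => absurd ?_ hn
    simp only [mem_filter, mem_pairsWithLeaves] at hp
    exact ⟨p.1.leaves, hp.2 ▸ hp.1.symm⟩

theorem sum_pair_add_diagonal_correction (a b : Otter) :
    ∑ p ∈ ({(a, b), (b, a)} : Finset (Otter × Otter)),
        ((X : ℚ[X]) ^ (p.1.sym + p.2.sym)
          + if p.1 = p.2 then (2 * X - 1) * X ^ (p.1.sym + p.2.sym) else 0)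
      = 2 * X ^ (node a b).sym := by
  rw [sym_node]
  by_cases hab : a = b
  · subst hab
    rw [insert_eq_self.2 (mem_singleton_self _), sum_singleton]
    simp only [if_true, pow_succ]
    ring
  · have hne : (a, b) ≠ (b, a) := fun h => hab (Prod.mk.inj h).1
    rw [sum_pair hne]
    simp only [hab, Ne.symm hab, if_false, add_zero, Nat.add_comm b.sym]
    ring

theorem two_mul_phi {n : ℕ} (hn : 2 ≤ n) :
    2 * phi n = ∑ k ∈ Finset.Ico 1 n, phi k * phi (n - k)
      + (2 * X - 1) * (if Even n then (phi (n / 2)).comp (X ^ 2) else 0) := by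
  have hfiber : ∀ t ∈ withLeaves n, 2 * (X : ℚ[X]) ^ t.sym
      = ∑ p ∈ pairsWithLeaves n with node p.1 p.2 = t, ((X : ℚ[X]) ^ (p.1.sym + p.2.sym)
          + if p.1 = p.2 then (2 * X - 1) * X ^ (p.1.sym + p.2.sym) else 0) := by
    intro t ht
    rw [mem_withLeaves] at ht
    obtain ⟨a, b, rfl⟩ := exists_node_eq (hn.trans_eq ht.symm)
    rw [filter_node_eq_node ((leaves_node a b).symm.trans ht),
      sum_pair_add_diagonal_correction]
  rw [sum_phi_mul_phi, ← sum_diagonal_pairsWithLeaves, phi_eq_sum, mul_sum, sum_congr rfl hfiber,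
    sum_fiberwise_of_maps_to
      (fun p hp => mem_withLeaves.2 ((leaves_node _ _).trans (mem_pairsWithLeaves.1 hp))),
    sum_add_distrib, ← sum_filter, mul_sum]

/-- `φ_1(u) = 1` and, for `n ≥ 2`,
`φ_n(u) = (1/2) Σ_{k=1}^{n-1} φ_k(u) φ_{n−k}(u) + (u − 1/2)[n even] φ_{n/2}(u²)`. -/
theorem phi_recurrence :
    phi 1 = 1 ∧
    ∀ n : ℕ, 2 ≤ n →
      phi n = Polynomial.C (1 / 2 : ℚ) * ∑ k ∈ Finset.Ico 1 n, phi k * phi (n - k)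
        + (if Even n then
            (Polynomial.X - Polynomial.C (1 / 2 : ℚ)) * (phi (n / 2)).comp (Polynomial.X ^ 2)
          else 0) := by
  refine ⟨phi_one, fun n hn => ?_⟩
  have hhalf : C (1 / 2 : ℚ) * 2 = 1 := by rw [← C_ofNat, ← C_mul]; norm_num
  rw [← mul_ite_zero]
  linear_combination C (1 / 2 : ℚ) * two_mul_phi hn
    + (X * (if Even n then (phi (n / 2)).comp (X ^ 2) else 0) - phi n) * hhalf
end
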